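/- For a definite determinantal representation, the hyperbolicity cone equals the spectrahedron: if A₁,…,Aₙ are real symmetric m×m matrices with A(e) ≻ 0 and h = det(∑xᵢAᵢ), then Λ(h,e) = {v ∈ ℝⁿ : ∑vᵢAᵢ ⪰ 0}. -/

import Mathlib

/-!
Write `M = ∑ vᵢ Aᵢ` and `N = A(e)`, so that `h(te + v) = det (M + t N)`. If `M ⪰ 0`, then
`M + t N ≻ 0` for `t > 0`, so no positive `t` is a root. Conversely, choosing `P` invertible
with `Pᴴ N P = 1` (e.g. `P = N^{-1/2}`), the roots of `t ↦ det (M + t N)` are those of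
`t ↦ det (Pᴴ M P + t)`, i.e. the negated eigenvalues of the symmetric matrix `Pᴴ M P`; if none
is positive, `Pᴴ M P ⪰ 0`, hence `M ⪰ 0`.
-/

open MvPolynomial Polynomial Matrix

noncomputable def univPoly {n : ℕ} (h : MvPolynomial (Fin n) ℝ) (e v : Fin n → ℝ) : Polynomial ℝ :=
  MvPolynomial.aeval (fun i => Polynomial.C (v i) + Polynomial.C (e i) * Polynomial.X) h

def RealRooted (p : Polynomial ℝ) : Prop :=
  ∀ z : ℂ, (p.map (algebraMap ℝ ℂ)).IsRoot z → z.im = 0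

def Hyperbolic {n : ℕ} (h : MvPolynomial (Fin n) ℝ) (e : Fin n → ℝ) : Prop :=
  MvPolynomial.eval e h ≠ 0 ∧ ∀ v : Fin n → ℝ, RealRooted (univPoly h e v)

def hypCone {n : ℕ} (h : MvPolynomial (Fin n) ℝ) (e : Fin n → ℝ) : Set (Fin n → ℝ) :=
  {v | ∀ t : ℝ, (univPoly h e v).IsRoot t → t ≤ 0}

noncomputable def matPoly {n m : ℕ} (A : Fin n → Matrix (Fin m) (Fin m) ℝ) :
    Matrix (Fin m) (Fin m) (MvPolynomial (Fin n) ℝ) :=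
  fun j k => ∑ i, MvPolynomial.C (A i j k) * MvPolynomial.X i

theorem eval_univPoly {n : ℕ} (h : MvPolynomial (Fin n) ℝ) (e v : Fin n → ℝ) (t : ℝ) :
    (univPoly h e v).eval t = MvPolynomial.eval (v + t • e) h := by
  rw [univPoly, ← Polynomial.coe_evalRingHom, ← AlgHom.coe_toRingHom, ← RingHom.comp_apply]
  congr 1
  apply MvPolynomial.ringHom_ext <;> intro x
  · simp
  · simp only [RingHom.coe_comp, coe_evalRingHom, RingHom.coe_coe, Function.comp_apply,
      MvPolynomial.aeval_X, Polynomial.eval_add, Polynomial.eval_C, Polynomial.eval_mul,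
      Polynomial.eval_X, MvPolynomial.eval_X, Pi.add_apply, Pi.smul_apply, smul_eq_mul]
    ring

theorem eval_det_matPoly {n m : ℕ} (A : Fin n → Matrix (Fin m) (Fin m) ℝ)
    (x : Fin n → ℝ) :
    MvPolynomial.eval x (matPoly A).det = (∑ i, x i • A i).det := by
  rw [RingHom.map_det]
  congr 1
  ext j k
  simp [matPoly, Matrix.sum_apply, mul_comm]

theorem Matrix.isHermitian_sum_smul_of_isSymm {κ ι : Type*} [Fintype κ]
    {A : κ → Matrix ι ι ℝ} (hA : ∀ i, (A i).IsSymm) (v : κ → ℝ) :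
    (∑ i, v i • A i).IsHermitian :=
  isSelfAdjoint_sum _ fun i _ => ((hA i).smul (v i) : _)

section Pencil

variable {ι : Type*} [Fintype ι] [DecidableEq ι]

open scoped MatrixOrder in
theorem Matrix.PosDef.exists_isUnit_conjTranspose_mul_mul_eq_one {N : Matrix ι ι ℝ}
    (hN : N.PosDef) : ∃ P : Matrix ι ι ℝ, IsUnit P ∧ Pᴴ * N * P = 1 := by
  obtain ⟨S, hS, hSself, rfl⟩ :
      ∃ S : Matrix ι ι ℝ, IsUnit S.det ∧ Sᴴ = S ∧ S * S = N :=
    ⟨CFC.sqrt N, (isUnit_iff_isUnit_det _).mp <|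
        (CFC.isUnit_sqrt_iff N hN.posSemidef.nonneg).mpr hN.isUnit,
      (CFC.sqrt_nonneg N).isSelfAdjoint, CFC.sqrt_mul_sqrt_self N hN.posSemidef.nonneg⟩
  refine ⟨S⁻¹, (isUnit_iff_isUnit_det _).mpr (isUnit_nonsing_inv_det_iff.mpr hS), ?_⟩
  rw [conjTranspose_nonsing_inv, hSself, mul_assoc, mul_assoc, mul_nonsing_inv _ hS, mul_one,
    nonsing_inv_mul _ hS]

theorem Matrix.IsHermitian.posSemidef_of_forall_det_add_smul_one_ne_zero
    {B : Matrix ι ι ℝ} (hB : B.IsHermitian)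
    (h : ∀ t : ℝ, 0 < t → (B + t • 1).det ≠ 0) :
    B.PosSemidef := by
  refine posSemidef_iff_isHermitian_and_spectrum_nonneg.mpr ⟨hB, fun μ hμ => ?_⟩
  by_contra hμ_neg
  replace hμ_neg : μ < 0 := not_le.mp hμ_neg
  rw [spectrum.mem_iff, isUnit_iff_isUnit_det, isUnit_iff_ne_zero, not_not] at hμ
  apply h (-μ) (neg_pos.mpr hμ_neg)
  have hshift : B + -μ • 1 = -(algebraMap ℝ _ μ - B) := by
    simp only [Algebra.algebraMap_eq_smul_one, neg_smul, neg_sub]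
    abel
  rw [hshift, det_neg, hμ, mul_zero]

theorem Matrix.IsHermitian.posSemidef_iff_forall_det_add_smul_eq_zero_nonpos
    {M N : Matrix ι ι ℝ} (hM : M.IsHermitian) (hN : N.PosDef) :
    M.PosSemidef ↔ ∀ t : ℝ, (M + t • N).det = 0 → t ≤ 0 := by
  refine ⟨fun hM t hdet => not_lt.mp fun ht =>
    (PosDef.posSemidef_add hM (hN.smul ht)).det_pos.ne' hdet, fun h => ?_⟩
  obtain ⟨P, hP, hPNP⟩ := hN.exists_isUnit_conjTranspose_mul_mul_eq_one
  have hcongr (t : ℝ) : Pᴴ * (M + t • N) * P = Pᴴ * M * P + t • 1 := by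
    rw [Matrix.mul_add, Matrix.add_mul, Matrix.mul_smul, Matrix.smul_mul, hPNP]
  rw [← hP.posSemidef_star_left_conjugate_iff, star_eq_conjTranspose]
  refine (isHermitian_conjTranspose_mul_mul P hM).posSemidef_of_forall_det_add_smul_one_ne_zero
    fun t ht hdet => ht.not_ge (h t ?_)
  rw [← hcongr, det_mul, det_mul] at hdet
  simpa [((isUnit_iff_isUnit_det P).mp hP).ne_zero] using hdet

end Pencil

theorem stmt19 {n m : ℕ} (A : Fin n → Matrix (Fin m) (Fin m) ℝ)
    (hsymm : ∀ i, (A i).IsSymm) (e : Fin n → ℝ)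
    (hpd : (∑ i, e i • A i).PosDef) :
    hypCone (matPoly A).det e = {v : Fin n → ℝ | (∑ i, v i • A i).PosSemidef} := by
  ext v
  have hpencil (t : ℝ) :
      ∑ i, (v + t • e) i • A i = ∑ i, v i • A i + t • ∑ i, e i • A i := by
    simp only [Pi.add_apply, Pi.smul_apply, smul_eq_mul, add_smul, mul_smul,
      Finset.sum_add_distrib, Finset.smul_sum]
  simp only [hypCone, Set.mem_ofPred_eq, IsRoot.def, eval_univPoly, eval_det_matPoly, hpencil]
  exact ((isHermitian_sum_smul_of_isSymm hsymm v).posSemidef_iff_forall_det_add_smul_eq_zero_nonpos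
    hpd).symm
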